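/- arXiv:2009.06521 — 6 statements merged into one kernel-verified Lean document; each statement's English description precedes it below -/
import Mathlib

section
/- Any weakly chained diagonally dominant (WCDD) matrix is nonsingular. -/
/-!
If `A *ᵥ v = 0` with `v ≠ 0`, pick a row `i` where `|v i|` is maximal. Weak diagonal dominance
of row `i` forces `|v j| = |v i|` for every `j` with `A i j ≠ 0`, so maximality propagates along
walks in the graph of `A`. At the end of a walk to a strictly dominant row the same estimate
becomes strict unless `v` vanishes there, hence the maximum of `|v|` is `0`.
-/

/-- Row `i` of `A` is strictly diagonally dominant (SDD). -/
def RowSDD {N : ℕ} (A : Matrix (Fin N) (Fin N) ℝ) (i : Fin N) : Prop :=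
  ∑ j ∈ Finset.univ.erase i, |A i j| < |A i i|

/-- `A` is weakly diagonally dominant (WDD). -/
def IsWDD {N : ℕ} (A : Matrix (Fin N) (Fin N) ℝ) : Prop :=
  ∀ i, ∑ j ∈ Finset.univ.erase i, |A i j| ≤ |A i i|

/-- There is a walk in the directed graph of `A` (an edge `(i,j)` iff `A i j ≠ 0`)
from row `i` to some SDD row. -/
def WalkToSDD {N : ℕ} (A : Matrix (Fin N) (Fin N) ℝ) (i : Fin N) : Prop :=
  ∃ (m : ℕ) (p : Fin (m + 1) → Fin N), p 0 = i ∧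
    (∀ k : Fin m, A (p k.castSucc) (p k.succ) ≠ 0) ∧ RowSDD A (p (Fin.last m))

/-- `A` is weakly chained diagonally dominant (WCDD). -/
def IsWCDD {N : ℕ} (A : Matrix (Fin N) (Fin N) ℝ) : Prop :=
  IsWDD A ∧ ∀ i, WalkToSDD A i

open Finset

namespace Matrix

variable {ι R : Type*} [Fintype ι] [DecidableEq ι] [CommRing R] [LinearOrder R]
  [IsStrictOrderedRing R] {A : Matrix ι ι R} {v : ι → R} {i : ι}

theorem abs_diag_mul_le_of_mulVec_apply_eq_zero (h : (A *ᵥ v) i = 0) :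
    |A i i| * |v i| ≤ ∑ j ∈ univ.erase i, |A i j| * |v j| := by
  have hsplit : A i i * v i + ∑ j ∈ univ.erase i, A i j * v j = 0 := by
    rw [add_sum_erase univ (fun j => A i j * v j) (mem_univ i)]
    exact h
  calc |A i i| * |v i| = |∑ j ∈ univ.erase i, A i j * v j| := by
        rw [← abs_mul, eq_neg_of_add_eq_zero_left hsplit, abs_neg]
    _ ≤ ∑ j ∈ univ.erase i, |A i j * v j| := abs_sum_le_sum_abs _ _
    _ = ∑ j ∈ univ.erase i, |A i j| * |v j| := by simp only [abs_mul]

theorem sum_abs_mul_le_of_forall_abs_le (hmax : ∀ j, |v j| ≤ |v i|) :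
    ∑ j ∈ univ.erase i, |A i j| * |v j| ≤ (∑ j ∈ univ.erase i, |A i j|) * |v i| := by
  rw [sum_mul]
  exact sum_le_sum fun j _ => mul_le_mul_of_nonneg_left (hmax j) (abs_nonneg _)

theorem abs_apply_eq_of_mulVec_apply_eq_zero
    (hwdd : ∑ j ∈ univ.erase i, |A i j| ≤ |A i i|) (h : (A *ᵥ v) i = 0)
    (hmax : ∀ j, |v j| ≤ |v i|) {j : ι} (hij : A i j ≠ 0) : |v j| = |v i| := by
  by_contra hne
  have hji : j ≠ i := fun hji => hne (hji ▸ rfl)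
  have hlt : ∑ k ∈ univ.erase i, |A i k| * |v k| < (∑ k ∈ univ.erase i, |A i k|) * |v i| := by
    rw [sum_mul]
    refine sum_lt_sum (fun k _ => mul_le_mul_of_nonneg_left (hmax k) (abs_nonneg _))
      ⟨j, mem_erase.2 ⟨hji, mem_univ j⟩, ?_⟩
    exact mul_lt_mul_of_pos_left (lt_of_le_of_ne (hmax j) hne) (abs_pos.2 hij)
  have := abs_diag_mul_le_of_mulVec_apply_eq_zero h
  have := mul_le_mul_of_nonneg_right hwdd (abs_nonneg (v i))
  linarith

theorem apply_eq_zero_of_mulVec_apply_eq_zero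
    (hsdd : ∑ j ∈ univ.erase i, |A i j| < |A i i|) (h : (A *ᵥ v) i = 0)
    (hmax : ∀ j, |v j| ≤ |v i|) : v i = 0 := by
  by_contra hne
  have := mul_lt_mul_of_pos_right hsdd (abs_pos.2 hne)
  have := abs_diag_mul_le_of_mulVec_apply_eq_zero h
  have := sum_abs_mul_le_of_forall_abs_le (A := A) hmax
  linarith

end Matrix

open Matrix in
theorem IsWDD.apply_eq_zero_of_walkToSDD {N : ℕ} {A : Matrix (Fin N) (Fin N) ℝ}
    (hA : IsWDD A) {v : Fin N → ℝ} (hv : A *ᵥ v = 0) {i : Fin N}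
    (hmax : ∀ j, |v j| ≤ |v i|) (hwalk : WalkToSDD A i) : v i = 0 := by
  obtain ⟨m, p, rfl, hedge, hsdd⟩ := hwalk
  have hmax_along : ∀ k, ∀ j, |v j| ≤ |v (p k)| := by
    intro k
    induction k using Fin.induction with
    | zero => exact hmax
    | succ k ih =>
      rwa [abs_apply_eq_of_mulVec_apply_eq_zero (hA _) (congrFun hv _) ih (hedge k)]
  have hlast := apply_eq_zero_of_mulVec_apply_eq_zero hsdd (congrFun hv _) (hmax_along _)
  have := hmax_along (Fin.last m) (p 0)
  rwa [hlast, abs_zero, abs_nonpos_iff] at this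

/-- Any weakly chained diagonally dominant matrix is nonsingular. -/
theorem wcdd_nonsingular {N : ℕ} (A : Matrix (Fin N) (Fin N) ℝ) (hA : IsWCDD A) :
    A.det ≠ 0 := by
  intro hdet
  obtain ⟨v, hv0, hv⟩ := Matrix.exists_mulVec_eq_zero_iff.2 hdet
  obtain ⟨j₀, hj₀⟩ := Function.ne_iff.1 hv0
  obtain ⟨i, -, hmax⟩ := exists_max_image univ (fun j => |v j|) ⟨j₀, mem_univ j₀⟩
  have hvi : v i = 0 :=
    hA.1.apply_eq_zero_of_walkToSDD hv (fun j => hmax j (mem_univ j)) (hA.2 i)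
  have := hmax j₀ (mem_univ j₀)
  rw [hvi, abs_zero, abs_nonpos_iff] at this
  exact hj₀ this
end

section
/- Let Λ : [δ₋, δ*] → (0,∞) be C², with Λ' < 0 and ΛΛ'' < c(Λ')² for some constant 0 < c < 2. Then the function f(δ, d) := δ + U_γ^{-1}(Λ(δ)/Λ'(δ)) + d is strictly increasing in δ for each fixed d, where U_γ(x) = (1 − e^{−γx})/γ for γ > 0 and U₀ = Id. Consequently, for each d the equation f(δ, d) = 0 has at most one solution δ in [δ₋, δ*]. -/
/-- CARA utility `U_γ(x) = (1 - e^{-γx})/γ` for `γ > 0`, with `U₀ = Id`. -/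
noncomputable def Ugamma (γ x : ℝ) : ℝ :=
  if γ = 0 then x else (1 - Real.exp (-γ * x)) / γ

/-- Inverse of the CARA utility: `U_γ⁻¹(y) = -(1/γ) log(1 - γy)` for `γ > 0`,
with `U₀⁻¹ = Id`. -/
noncomputable def UgammaInv (γ y : ℝ) : ℝ :=
  if γ = 0 then y else -(1 / γ) * Real.log (1 - γ * y)


/-!
With `φ = Λ / Λ'`, the quotient rule gives `φ' = 1 - Λ Λ'' / Λ'² > 1 - c > -1`, and `φ < 0`.
Since `(U_γ⁻¹)'(y) = 1 / (1 - γ y)` and `1 - γ φ ≥ 1`, the derivative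
`1 + φ' / (1 - γ φ)` of `δ ↦ δ + U_γ⁻¹(φ δ)` is positive, so the map is strictly increasing
and in particular injective.
-/

open Set

lemma hasDerivAt_UgammaInv {γ y : ℝ} (hy : 0 < 1 - γ * y) :
    HasDerivAt (UgammaInv γ) (1 - γ * y)⁻¹ y := by
  rcases eq_or_ne γ 0 with rfl | hγ
  · have hid : UgammaInv 0 = id := funext fun _ => if_pos rfl
    simpa [hid] using hasDerivAt_id y
  · have hU : UgammaInv γ = fun y => -(1 / γ) * Real.log (1 - γ * y) :=
      funext fun _ => if_neg hγ
    have hlog : HasDerivAt (fun y => Real.log (1 - γ * y)) (-γ / (1 - γ * y)) y := by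
      simpa using (((hasDerivAt_id y).const_mul γ).const_sub 1).log hy.ne'
    rw [hU]
    exact (hlog.const_mul (-(1 / γ))).congr_deriv (by field_simp)

lemma HasDerivWithinAt.div_deriv {f f' : ℝ → ℝ} {f'' : ℝ} {s : Set ℝ} {x : ℝ}
    (hf : HasDerivWithinAt f (f' x) s x) (hf' : HasDerivWithinAt f' f'' s x) (hx : f' x ≠ 0) :
    HasDerivWithinAt (fun y => f y / f' y) (1 - f x * f'' / f' x ^ 2) s x :=
  (hf.div hf' hx).congr_deriv (by field_simp)

lemma one_add_div_pos_of_neg_one_lt_of_one_le {a b : ℝ} (ha : -1 < a) (hb : 1 ≤ b) :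
    0 < 1 + a / b := by
  have hb0 : 0 < b := zero_lt_one.trans_le hb
  rw [← div_self hb0.ne', ← add_div]
  apply div_pos _ hb0
  rcases le_or_gt 0 a with h | h <;> nlinarith

lemma strictMonoOn_add_UgammaInv_comp {γ : ℝ} (hγ : 0 ≤ γ) {s : Set ℝ} (hs : Convex ℝ s)
    {φ φ' : ℝ → ℝ} (hφ : ∀ x ∈ s, HasDerivWithinAt φ (φ' x) s x) (hφ_neg : ∀ x ∈ s, φ x < 0)
    (hφ' : ∀ x ∈ s, -1 < φ' x) :
    StrictMonoOn (fun x => x + UgammaInv γ (φ x)) s := by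
  have hden : ∀ x ∈ s, 1 ≤ 1 - γ * φ x := fun x hx => by nlinarith [hφ_neg x hx]
  have hderiv : ∀ x ∈ s,
      HasDerivWithinAt (fun x => x + UgammaInv γ (φ x)) (1 + φ' x / (1 - γ * φ x)) s x := by
    intro x hx
    have hU := (hasDerivAt_UgammaInv (zero_lt_one.trans_le (hden x hx))).comp_hasDerivWithinAt
      x (hφ x hx)
    exact ((hasDerivWithinAt_id x s).add hU).congr_deriv (by rw [div_eq_inv_mul])
  refine strictMonoOn_of_hasDerivWithinAt_pos hs
    (fun x hx => (hderiv x hx).continuousWithinAt)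
    (fun x hx => (hderiv x (interior_subset hx)).mono interior_subset)
    (fun x hx => one_add_div_pos_of_neg_one_lt_of_one_le (hφ' x (interior_subset hx))
      (hden x (interior_subset hx)))

theorem fixed_point_eq_unique_sol_general (γ c δm δs : ℝ) (hγ : 0 ≤ γ)
    (hc2 : c < 2) (hδ : δm < δs)
    (Λ : ℝ → ℝ) (hC2 : ContDiffOn ℝ 2 Λ (Set.Icc δm δs))
    (hpos : ∀ δ ∈ Set.Icc δm δs, 0 < Λ δ)
    (hder : ∀ δ ∈ Set.Icc δm δs, derivWithin Λ (Set.Icc δm δs) δ < 0)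
    (hineq : ∀ δ ∈ Set.Icc δm δs,
      Λ δ * derivWithin (derivWithin Λ (Set.Icc δm δs)) (Set.Icc δm δs) δ
        < c * (derivWithin Λ (Set.Icc δm δs) δ) ^ 2) :
    ∀ d : ℝ,
      StrictMonoOn
        (fun δ => δ + UgammaInv γ (Λ δ / derivWithin Λ (Set.Icc δm δs) δ) + d)
        (Set.Icc δm δs) ∧
      ∀ δ₁ ∈ Set.Icc δm δs, ∀ δ₂ ∈ Set.Icc δm δs,
        δ₁ + UgammaInv γ (Λ δ₁ / derivWithin Λ (Set.Icc δm δs) δ₁) + d = 0 →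
        δ₂ + UgammaInv γ (Λ δ₂ / derivWithin Λ (Set.Icc δm δs) δ₂) + d = 0 →
        δ₁ = δ₂ := by
  intro d
  set s := Icc δm δs
  set Λ' := derivWithin Λ s
  have hΛ'_diff : DifferentiableOn ℝ Λ' s :=
    (hC2.derivWithin (uniqueDiffOn_Icc hδ) le_rfl).differentiableOn one_ne_zero
  have hφ : ∀ δ ∈ s, HasDerivWithinAt (fun δ => Λ δ / Λ' δ)
      (1 - Λ δ * derivWithin Λ' s δ / Λ' δ ^ 2) s δ := fun δ hδs =>
    ((hC2.differentiableOn two_ne_zero δ hδs).hasDerivWithinAt).div_deriv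
      (hΛ'_diff δ hδs).hasDerivWithinAt (hder δ hδs).ne
  have hφ' : ∀ δ ∈ s, -1 < 1 - Λ δ * derivWithin Λ' s δ / Λ' δ ^ 2 := by
    intro δ hδs
    have hsq : 0 < Λ' δ ^ 2 := pow_two_pos_of_ne_zero (hder δ hδs).ne
    have : Λ δ * derivWithin Λ' s δ / Λ' δ ^ 2 < c := (div_lt_iff₀ hsq).2 (hineq δ hδs)
    linarith
  have hmono := strictMonoOn_add_UgammaInv_comp hγ (convex_Icc δm δs) hφ
    (fun δ hδs => div_neg_of_pos_of_neg (hpos δ hδs) (hder δ hδs)) hφ'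
  have hmono_d : StrictMonoOn
      (fun δ => δ + UgammaInv γ (Λ δ / Λ' δ) + d) s := fun a ha b hb hab => by
    simpa using hmono ha hb hab
  exact ⟨hmono_d, fun δ₁ h₁ δ₂ h₂ e₁ e₂ => hmono_d.injOn h₁ h₂ (e₁.trans e₂.symm)⟩

/-- Let `Λ : [δ₋, δ*] → (0,∞)` be C² with `Λ' < 0` and `ΛΛ'' < c (Λ')²` for some
`0 < c < 2`. Then `f(δ,d) = δ + U_γ⁻¹(Λ(δ)/Λ'(δ)) + d` is strictly increasing in `δ`
for each fixed `d`; consequently `f(·,d) = 0` has at most one solution in `[δ₋, δ*]`. -/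
theorem fixed_point_eq_unique_sol (γ c δm δs : ℝ) (hγ : 0 ≤ γ)
    (hc0 : 0 < c) (hc2 : c < 2) (hδ : δm < δs)
    (Λ : ℝ → ℝ) (hC2 : ContDiffOn ℝ 2 Λ (Set.Icc δm δs))
    (hpos : ∀ δ ∈ Set.Icc δm δs, 0 < Λ δ)
    (hder : ∀ δ ∈ Set.Icc δm δs, derivWithin Λ (Set.Icc δm δs) δ < 0)
    (hineq : ∀ δ ∈ Set.Icc δm δs,
      Λ δ * derivWithin (derivWithin Λ (Set.Icc δm δs)) (Set.Icc δm δs) δ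
        < c * (derivWithin Λ (Set.Icc δm δs) δ) ^ 2) :
    ∀ d : ℝ,
      StrictMonoOn
        (fun δ => δ + UgammaInv γ (Λ δ / derivWithin Λ (Set.Icc δm δs) δ) + d)
        (Set.Icc δm δs) ∧
      ∀ δ₁ ∈ Set.Icc δm δs, ∀ δ₂ ∈ Set.Icc δm δs,
        δ₁ + UgammaInv γ (Λ δ₁ / derivWithin Λ (Set.Icc δm δs) δ₁) + d = 0 →
        δ₂ + UgammaInv γ (Λ δ₂ / derivWithin Λ (Set.Icc δm δs) δ₂) + d = 0 →
        δ₁ = δ₂ :=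
  fixed_point_eq_unique_sol_general γ c δm δs hγ hc2 hδ Λ hC2 hpos hder hineq
end

section
/- Let Λ : ℝ → (0,∞) be continuous and decreasing with lim_{δ→+∞} δ·Λ(δ) = 0, and let h(δ, d) := Λ(δ)·(δ + d) for d ∈ ℝ. Then for each compact K ⊂ ℝ there exists a compact interval [a,b] ⊂ ℝ such that sup_{δ∈ℝ} h(δ, d) = max_{δ∈[a,b]} h(δ, d) for all d ∈ K. Moreover, H(d) := sup_{δ∈ℝ} h(δ, d) is locally Lipschitz on ℝ. -/
/-!
For `|d| ≤ M` the function `δ ↦ Λ δ * (δ + d)` is negative for `δ < -M`, is at least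
`Λ (1 + M) > 0` at `δ = 1 - d`, and drops below that value for large `δ` because
`δ * Λ δ → 0`; so it attains its maximum in a window `[-M, b]` depending only on `M`.
Comparing `H d` and `H d'` through the maximizer `δ₀ ∈ [a, b]` of one of them gives
`H d - H d' ≤ Λ δ₀ * (d - d') ≤ Λ a * |d - d'|`, as `Λ` is antitone.
-/

open Filter Set

theorem IsCompact.exists_mem_forall_ge_of_notMem_le {α : Type*} [TopologicalSpace α]
    {s : Set α} {g : α → ℝ} {p : α} (hs : IsCompact s) (hg : ContinuousOn g s) (hp : p ∈ s)
    (hout : ∀ x ∉ s, g x ≤ g p) : ∃ x₀ ∈ s, ∀ x, g x ≤ g x₀ := by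
  obtain ⟨x₀, hx₀, hmax⟩ := hs.exists_isMaxOn ⟨p, hp⟩ hg
  refine ⟨x₀, hx₀, fun x => ?_⟩
  by_cases hx : x ∈ s
  · exact hmax hx
  · exact (hout x hx).trans (hmax hp)

theorem ciSup_sub_ciSup_le {ι : Type*} [Nonempty ι] {g g' : ι → ℝ} {i₀ : ι}
    (hmax : ∀ i, g i ≤ g i₀) (hbdd : BddAbove (range g')) :
    (⨆ i, g i) - (⨆ i, g' i) ≤ g i₀ - g' i₀ :=
  sub_le_sub (ciSup_le hmax) (le_ciSup hbdd i₀)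

noncomputable def hamiltonian (Λ : ℝ → ℝ) (d : ℝ) : ℝ := ⨆ δ, Λ δ * (δ + d)

namespace Hamiltonian

variable {Λ : ℝ → ℝ}

theorem eventually_mul_add_lt (hpos : ∀ δ, 0 ≤ Λ δ)
    (hlim : Tendsto (fun δ => δ * Λ δ) atTop (nhds 0)) (M : ℝ) {c : ℝ} (hc : 0 < c) :
    ∀ᶠ δ in atTop, ∀ d ≤ M, Λ δ * (δ + d) < c := by
  filter_upwards [hlim.eventually_lt_const (half_pos hc), eventually_ge_atTop M]
    with δ hsmall hδ d hd
  calc Λ δ * (δ + d) ≤ Λ δ * (2 * δ) := mul_le_mul_of_nonneg_left (by linarith) (hpos δ)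
    _ < c := by linarith

theorem exists_Icc_forall_le (hcont : Continuous Λ) (hanti : Antitone Λ)
    (hpos : ∀ δ, 0 < Λ δ) (hlim : Tendsto (fun δ => δ * Λ δ) atTop (nhds 0))
    {M : ℝ} (hM : 0 ≤ M) :
    ∃ b, -M ≤ b ∧ ∀ d, |d| ≤ M →
      ∃ δ₀ ∈ Icc (-M) b, ∀ δ, Λ δ * (δ + d) ≤ Λ δ₀ * (δ₀ + d) := by
  obtain ⟨b₀, htail⟩ := eventually_atTop.mp
    (eventually_mul_add_lt (fun δ => (hpos δ).le) hlim M (hpos (1 + M)))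
  set b := max b₀ (1 + M)
  refine ⟨b, by linarith [le_max_right b₀ (1 + M)], fun d hd => ?_⟩
  obtain ⟨hMd, hdM⟩ := abs_le.mp hd
  have hp : 1 - d ∈ Icc (-M) b := ⟨by linarith, by linarith [le_max_right b₀ (1 + M)]⟩
  have hfloor : Λ (1 + M) ≤ Λ (1 - d) * (1 - d + d) := by
    rw [sub_add_cancel, mul_one]
    exact hanti (by linarith)
  refine isCompact_Icc.exists_mem_forall_ge_of_notMem_le (by fun_prop) hp fun δ hδ => ?_
  refine le_trans (le_of_lt ?_) hfloor
  rcases not_and_or.mp hδ with hleft | hright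
  · have hneg : δ + d < 0 := by linarith [not_le.mp hleft]
    exact (mul_neg_of_pos_of_neg (hpos δ) hneg).trans (hpos _)
  · exact htail δ ((le_max_left _ _).trans (not_le.mp hright).le) d hdM

theorem exists_Icc_forall_le_of_isCompact (hcont : Continuous Λ) (hanti : Antitone Λ)
    (hpos : ∀ δ, 0 < Λ δ) (hlim : Tendsto (fun δ => δ * Λ δ) atTop (nhds 0))
    {K : Set ℝ} (hK : IsCompact K) :
    ∃ a b : ℝ, a ≤ b ∧ ∀ d ∈ K,
      ∃ δ₀ ∈ Icc a b, ∀ δ, Λ δ * (δ + d) ≤ Λ δ₀ * (δ₀ + d) := by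
  obtain ⟨C, hC⟩ := hK.isBounded.exists_norm_le
  obtain ⟨b, hb, hwin⟩ := exists_Icc_forall_le hcont hanti hpos hlim (le_max_right C 0)
  exact ⟨_, b, hb, fun d hd => hwin d ((hC d hd).trans (le_max_left C 0))⟩

theorem hamiltonian_sub_le {d d' δ₀ δ₁ : ℝ} (h₀ : ∀ δ, Λ δ * (δ + d) ≤ Λ δ₀ * (δ₀ + d))
    (h₁ : ∀ δ, Λ δ * (δ + d') ≤ Λ δ₁ * (δ₁ + d')) :
    hamiltonian Λ d - hamiltonian Λ d' ≤ Λ δ₀ * (d - d') := by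
  have hbdd : BddAbove (range fun δ => Λ δ * (δ + d')) := ⟨_, forall_mem_range.mpr h₁⟩
  calc hamiltonian Λ d - hamiltonian Λ d'
      ≤ Λ δ₀ * (δ₀ + d) - Λ δ₀ * (δ₀ + d') := ciSup_sub_ciSup_le h₀ hbdd
    _ = Λ δ₀ * (d - d') := by ring

theorem lipschitzOnWith_hamiltonian (hanti : Antitone Λ) (hpos : ∀ δ, 0 < Λ δ)
    {a b : ℝ} {s : Set ℝ}
    (hmax : ∀ d ∈ s, ∃ δ₀ ∈ Icc a b, ∀ δ, Λ δ * (δ + d) ≤ Λ δ₀ * (δ₀ + d)) :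
    LipschitzOnWith (Λ a).toNNReal (hamiltonian Λ) s := by
  refine LipschitzOnWith.of_dist_le_mul fun d hd d' hd' => ?_
  obtain ⟨δ₀, hδ₀, h₀⟩ := hmax d hd
  obtain ⟨δ₁, hδ₁, h₁⟩ := hmax d' hd'
  have bound : ∀ δ ∈ Icc a b, ∀ x y : ℝ, Λ δ * (x - y) ≤ Λ a * |x - y| := fun δ hδ x y =>
    calc Λ δ * (x - y) ≤ Λ δ * |x - y| := mul_le_mul_of_nonneg_left (le_abs_self _) (hpos _).le
      _ ≤ Λ a * |x - y| := mul_le_mul_of_nonneg_right (hanti hδ.1) (abs_nonneg _)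
  rw [Real.dist_eq, Real.dist_eq, Real.coe_toNNReal _ (hpos a).le, abs_sub_le_iff]
  refine ⟨(hamiltonian_sub_le h₀ h₁).trans (bound δ₀ hδ₀ _ _), ?_⟩
  rw [abs_sub_comm]
  exact (hamiltonian_sub_le h₁ h₀).trans (bound δ₁ hδ₁ _ _)

end Hamiltonian

open Hamiltonian in
/-- Let `Λ : ℝ → (0,∞)` be continuous, decreasing, with `δ·Λ(δ) → 0` as `δ → +∞`,
and `h(δ,d) = Λ(δ)(δ+d)`. Then for each compact `K` there is a compact interval
`[a,b]` on which the supremum over `ℝ` of `h(·,d)` is attained for all `d ∈ K`;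
moreover `H(d) = sup_δ h(δ,d)` is locally Lipschitz. -/
theorem hamiltonian_max_and_locally_lipschitz
    (Λ : ℝ → ℝ) (hcont : Continuous Λ) (hanti : Antitone Λ)
    (hpos : ∀ δ, 0 < Λ δ)
    (hlim : Filter.Tendsto (fun δ => δ * Λ δ) Filter.atTop (nhds 0)) :
    (∀ K : Set ℝ, IsCompact K → ∃ a b : ℝ, a ≤ b ∧ ∀ d ∈ K,
      ∃ δ₀ ∈ Set.Icc a b, ∀ δ : ℝ, Λ δ * (δ + d) ≤ Λ δ₀ * (δ₀ + d)) ∧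
    LocallyLipschitz (fun d => ⨆ δ : ℝ, Λ δ * (δ + d)) := by
  refine ⟨fun K hK => exists_Icc_forall_le_of_isCompact hcont hanti hpos hlim hK, fun x => ?_⟩
  obtain ⟨a, b, -, hwin⟩ := exists_Icc_forall_le_of_isCompact hcont hanti hpos hlim
    (isCompact_Icc (a := x - 1) (b := x + 1))
  exact ⟨_, _, Icc_mem_nhds (by linarith) (by linarith),
    lipschitzOnWith_hamiltonian hanti hpos hwin⟩
end

section
/- Comparison principle for the market-making HJB system of ODEs: let I ⊆ [0,T] be an interval containing T, and let θ̄, θ̲ : I × ℐ → ℝ be C¹ in time, where ℐ = (ℤ ∩ [−N*, N*]) × {1,…,k} with N* < ∞. Suppose θ̄ is a supersolution and θ̲ a subsolution of the terminal-value system 0 = θ_t(t,n,i) + μn − ½σ²n²(ζ+γ) + Σ_{j≠i} q_t^{ij} U_γ(θ(t,n,j) − θ(t,n,i)) + 1_{n<N*} H_i^−(θ(t,n+1,i) − θ(t,n,i)) + 1_{−n<N*} H_i^+(θ(t,n−1,i) − θ(t,n,i)), and θ̲(T,·,·) ≤ −ℓ ≤ θ̄(T,·,·). Then θ̲ ≤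 θ̄ on I × ℐ. -/
open Set

lemma Ugamma_monotone {γ : ℝ} (hγ : 0 ≤ γ) : Monotone (Ugamma γ) := by
  rcases hγ.eq_or_lt with rfl | hγ
  · intro x y hxy
    simpa [Ugamma] using hxy
  · intro x y hxy
    have : Real.exp (-γ * y) ≤ Real.exp (-γ * x) := Real.exp_le_exp.2 (by nlinarith)
    simp only [Ugamma, hγ.ne', if_false]
    gcongr

lemma IsCompact.exists_forall_le_finset {X ι : Type*} [TopologicalSpace X] {K : Set X}
    (hK : IsCompact K) (hKne : K.Nonempty) {S : Finset ι} (hS : S.Nonempty) {f : X → ι → ℝ}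
    (hf : ∀ p ∈ S, ContinuousOn (fun x => f x p) K) :
    ∃ x₀ ∈ K, ∃ p₀ ∈ S, ∀ x ∈ K, ∀ p ∈ S, f x₀ p₀ ≤ f x p := by
  obtain ⟨x₀, hx₀, hmin⟩ :=
    hK.exists_isMinOn hKne (ContinuousOn.finset_inf'_apply hS hf)
  obtain ⟨p₀, hp₀, hp₀min⟩ := S.exists_mem_eq_inf' hS (f x₀)
  refine ⟨x₀, hx₀, p₀, hp₀, fun x hx p hp => ?_⟩
  rw [← hp₀min]
  exact (hmin hx).trans (Finset.inf'_le _ hp)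

lemma HasDerivWithinAt.nonneg_of_isMinOn_Icc {f : ℝ → ℝ} {f' a b : ℝ} (hab : a < b)
    (hf : HasDerivWithinAt f f' (Icc a b) a) (hmin : IsMinOn f (Icc a b) a) : 0 ≤ f' := by
  have hcone : b - a ∈ posTangentConeAt (Icc a b) a :=
    mem_posTangentConeAt_of_segment_subset (by rw [add_sub_cancel, segment_eq_Icc hab.le])
  have := hmin.localize.hasFDerivWithinAt_nonneg hf.hasFDerivWithinAt hcone
  simp only [ContinuousLinearMap.toSpanSingleton_apply, smul_eq_mul] at this
  exact nonneg_of_mul_nonneg_right this (sub_pos.2 hab)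

section MinimumPrinciple

variable {ι : Type*} {S : Finset ι} {w w' : ℝ → ι → ℝ} {a b : ℝ}

lemma nonneg_add_mul_of_deriv_nonpos_at_min {ε : ℝ} (hε : 0 < ε)
    (hw : ∀ p ∈ S, ∀ t ∈ Icc a b, HasDerivWithinAt (fun s => w s p) (w' t p) (Icc a b) t)
    (hmin : ∀ t ∈ Ico a b, ∀ p ∈ S, (∀ q ∈ S, w t p ≤ w t q) → w' t p ≤ 0)
    (hb : ∀ p ∈ S, 0 ≤ w b p) {t : ℝ} (ht : t ∈ Icc a b) {p : ι} (hp : p ∈ S) :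
    0 ≤ w t p + ε * (b - t) := by
  set ψ : ℝ → ι → ℝ := fun s q => w s q + ε * (b - s)
  have hψ : ∀ q ∈ S, ∀ s ∈ Icc a b,
      HasDerivWithinAt (fun s => ψ s q) (w' s q - ε) (Icc a b) s := fun q hq s hs =>
    ((hw q hq s hs).add (((hasDerivWithinAt_id s _).const_sub b).const_mul ε)).congr_deriv
      (by ring)
  obtain ⟨s₀, hs₀, p₀, hp₀, hψmin⟩ := isCompact_Icc.exists_forall_le_finset
    ⟨t, ht⟩ ⟨p, hp⟩ fun q hq s hs => (hψ q hq s hs).continuousWithinAt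
  refine le_trans ?_ (hψmin t ht p hp)
  rcases hs₀.2.eq_or_lt with rfl | hs₀b
  · simpa [ψ] using hb p₀ hp₀
  · have hspace : ∀ q ∈ S, w s₀ p₀ ≤ w s₀ q := fun q hq => by
      simpa [ψ] using hψmin s₀ hs₀ q hq
    have htime : 0 ≤ w' s₀ p₀ - ε :=
      ((hψ p₀ hp₀ s₀ hs₀).mono (Icc_subset_Icc_left hs₀.1)).nonneg_of_isMinOn_Icc
        hs₀b fun s hs => hψmin s ⟨hs₀.1.trans hs.1, hs.2⟩ p₀ hp₀
    linarith [hmin s₀ ⟨hs₀.1, hs₀b⟩ p₀ hp₀ hspace]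

theorem nonneg_of_deriv_nonpos_at_min
    (hw : ∀ p ∈ S, ∀ t ∈ Icc a b, HasDerivWithinAt (fun s => w s p) (w' t p) (Icc a b) t)
    (hmin : ∀ t ∈ Ico a b, ∀ p ∈ S, (∀ q ∈ S, w t p ≤ w t q) → w' t p ≤ 0)
    (hb : ∀ p ∈ S, 0 ≤ w b p) {t : ℝ} (ht : t ∈ Icc a b) {p : ι} (hp : p ∈ S) :
    0 ≤ w t p := by
  refine le_of_forall_pos_le_add fun δ hδ => ?_
  have hbt : 0 ≤ b - t := sub_nonneg.2 ht.2
  have hpos : 0 < b - t + 1 := by linarith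
  have hpen := nonneg_add_mul_of_deriv_nonpos_at_min (div_pos hδ hpos) hw hmin hb ht hp
  have : δ / (b - t + 1) * (b - t) ≤ δ := by
    rw [div_mul_eq_mul_div, div_le_iff₀ hpos]
    nlinarith
  linarith

end MinimumPrinciple

noncomputable def hjbOperator {k : ℕ} (μ σ ζ γ : ℝ) (Nstar : ℕ) (q : Fin k → Fin k → ℝ)
    (Hm Hp : Fin k → ℝ → ℝ) (θ : ℤ → Fin k → ℝ) (n : ℤ) (i : Fin k) : ℝ :=
  μ * (n : ℝ) - (1 / 2) * σ ^ 2 * (n : ℝ) ^ 2 * (ζ + γ)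
    + ∑ j ∈ Finset.univ.erase i, q i j * Ugamma γ (θ n j - θ n i)
    + (if n < (Nstar : ℤ) then Hm i (θ (n + 1) i - θ n i) else 0)
    + (if -n < (Nstar : ℤ) then Hp i (θ (n - 1) i - θ n i) else 0)

lemma hjbOperator_le_of_isMin_sub {k : ℕ} {μ σ ζ γ : ℝ} {Nstar : ℕ} {q : Fin k → Fin k → ℝ}
    {Hm Hp : Fin k → ℝ → ℝ} (hγ : 0 ≤ γ) (hq : ∀ i j, i ≠ j → 0 ≤ q i j)
    (hHm : ∀ i, Monotone (Hm i)) (hHp : ∀ i, Monotone (Hp i)) {θ θ' : ℤ → Fin k → ℝ}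
    {n : ℤ} {i : Fin k} (hn : |n| ≤ (Nstar : ℤ))
    (hmin : ∀ m j, |m| ≤ (Nstar : ℤ) → θ' n i - θ n i ≤ θ' m j - θ m j) :
    hjbOperator μ σ ζ γ Nstar q Hm Hp θ n i ≤ hjbOperator μ σ ζ γ Nstar q Hm Hp θ' n i := by
  have hgap : ∀ m j, |m| ≤ (Nstar : ℤ) → θ m j - θ n i ≤ θ' m j - θ' n i := fun m j hm => by
    linarith [hmin m j hm]
  rw [abs_le] at hn
  unfold hjbOperator
  gcongr with j hj
  · exact hq i j (Finset.ne_of_mem_erase hj).symm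
  · exact Ugamma_monotone hγ (hgap n j (abs_le.2 hn))
  · split_ifs with h
    · exact hHm i (hgap _ _ (abs_le.2 ⟨by omega, by omega⟩))
    · rfl
  · split_ifs with h
    · exact hHp i (hgap _ _ (abs_le.2 ⟨by omega, by omega⟩))
    · rfl

theorem comparison_principle_general
    (T μ σ ζ γ : ℝ) (hγ : 0 ≤ γ)
    (Nstar k : ℕ)
    (q : ℝ → Fin k → Fin k → ℝ)
    (hqnn : ∀ t : ℝ, ∀ i j : Fin k, i ≠ j → 0 ≤ q t i j)
    (Hm Hp : Fin k → ℝ → ℝ)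
    (hHmMono : ∀ i, Monotone (Hm i)) (hHpMono : ∀ i, Monotone (Hp i))
    (ℓ : ℤ → ℝ)
    (I : Set ℝ) (hIsub : I ⊆ Set.Icc 0 T) (hTI : T ∈ I) (hIconn : I.OrdConnected)
    (θu θl Du Dl : ℝ → ℤ → Fin k → ℝ)
    (hdu : ∀ (n : ℤ) (i : Fin k), |n| ≤ (Nstar : ℤ) → ∀ t ∈ I,
      HasDerivWithinAt (fun s => θu s n i) (Du t n i) I t)
    (hdl : ∀ (n : ℤ) (i : Fin k), |n| ≤ (Nstar : ℤ) → ∀ t ∈ I,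
      HasDerivWithinAt (fun s => θl s n i) (Dl t n i) I t)
    (hsuper : ∀ t ∈ I, ∀ (n : ℤ) (i : Fin k), |n| ≤ (Nstar : ℤ) →
      Du t n i + μ * (n : ℝ) - (1 / 2) * σ ^ 2 * (n : ℝ) ^ 2 * (ζ + γ)
        + ∑ j ∈ Finset.univ.erase i, q t i j * Ugamma γ (θu t n j - θu t n i)
        + (if n < (Nstar : ℤ) then Hm i (θu t (n + 1) i - θu t n i) else 0)
        + (if -n < (Nstar : ℤ) then Hp i (θu t (n - 1) i - θu t n i) else 0) ≤ 0)
    (hsub : ∀ t ∈ I, ∀ (n : ℤ) (i : Fin k), |n| ≤ (Nstar : ℤ) →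
      0 ≤ Dl t n i + μ * (n : ℝ) - (1 / 2) * σ ^ 2 * (n : ℝ) ^ 2 * (ζ + γ)
        + ∑ j ∈ Finset.univ.erase i, q t i j * Ugamma γ (θl t n j - θl t n i)
        + (if n < (Nstar : ℤ) then Hm i (θl t (n + 1) i - θl t n i) else 0)
        + (if -n < (Nstar : ℤ) then Hp i (θl t (n - 1) i - θl t n i) else 0))
    (hterm : ∀ (n : ℤ) (i : Fin k), |n| ≤ (Nstar : ℤ) →
      θl T n i ≤ -ℓ n ∧ -ℓ n ≤ θu T n i) :
    ∀ t ∈ I, ∀ (n : ℤ) (i : Fin k), |n| ≤ (Nstar : ℤ) → θl t n i ≤ θu t n i := by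
  intro t ht n i hn
  have hJ : Icc t T ⊆ I := hIconn.out ht hTI
  have hbox : ∀ p : ℤ × Fin k,
      p ∈ Finset.Icc (-(Nstar : ℤ)) Nstar ×ˢ Finset.univ ↔ |p.1| ≤ (Nstar : ℤ) := by
    simp [abs_le]
  refine sub_nonneg.1 <| nonneg_of_deriv_nonpos_at_min
    (w := fun s p => θu s p.1 p.2 - θl s p.1 p.2) (w' := fun s p => Du s p.1 p.2 - Dl s p.1 p.2)
    ?_ ?_ ?_ ⟨le_rfl, (hIsub ht).2⟩ ((hbox (n, i)).2 hn)
  · intro p hp s hs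
    exact ((hdu _ _ ((hbox p).1 hp) s (hJ hs)).sub (hdl _ _ ((hbox p).1 hp) s (hJ hs))).mono hJ
  · intro s hs p hp hmin
    have hsI := hJ (Ico_subset_Icc_self hs)
    have hF := hjbOperator_le_of_isMin_sub (μ := μ) (σ := σ) (ζ := ζ) hγ (hqnn s) hHmMono hHpMono
      (θ := θl s) (θ' := θu s) ((hbox p).1 hp) fun m j hm => hmin (m, j) ((hbox _).2 hm)
    unfold hjbOperator at hF
    linarith [hsuper s hsI p.1 p.2 ((hbox p).1 hp), hsub s hsI p.1 p.2 ((hbox p).1 hp)]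
  · intro p hp
    obtain ⟨hl, hu⟩ := hterm p.1 p.2 ((hbox p).1 hp)
    linarith

/-- Comparison principle for the market-making HJB system of ODEs: any classical
(C¹ in time) supersolution dominates any classical subsolution, given the terminal
ordering `θ̲(T,·,·) ≤ -ℓ ≤ θ̄(T,·,·)`. -/
theorem comparison_principle
    (T μ σ ζ γ : ℝ) (hT : 0 < T) (hσ : 0 ≤ σ) (hζ : 0 ≤ ζ) (hγ : 0 ≤ γ)
    (Nstar k : ℕ)
    (q : ℝ → Fin k → Fin k → ℝ)
    (hqc : ∀ i j, ContinuousOn (fun t => q t i j) (Set.Icc 0 T))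
    (hqnn : ∀ t : ℝ, ∀ i j : Fin k, i ≠ j → 0 ≤ q t i j)
    (hqsum : ∀ t : ℝ, ∀ i : Fin k, ∑ j, q t i j = 0)
    (Hm Hp : Fin k → ℝ → ℝ)
    (hHmMono : ∀ i, Monotone (Hm i)) (hHpMono : ∀ i, Monotone (Hp i))
    (hHmLip : ∀ i, LocallyLipschitz (Hm i)) (hHpLip : ∀ i, LocallyLipschitz (Hp i))
    (ℓ : ℤ → ℝ) (hℓ : ∀ n, 0 ≤ ℓ n)
    (I : Set ℝ) (hIsub : I ⊆ Set.Icc 0 T) (hTI : T ∈ I) (hIconn : I.OrdConnected)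
    (θu θl Du Dl : ℝ → ℤ → Fin k → ℝ)
    (hdu : ∀ (n : ℤ) (i : Fin k), |n| ≤ (Nstar : ℤ) → ∀ t ∈ I,
      HasDerivWithinAt (fun s => θu s n i) (Du t n i) I t)
    (hdl : ∀ (n : ℤ) (i : Fin k), |n| ≤ (Nstar : ℤ) → ∀ t ∈ I,
      HasDerivWithinAt (fun s => θl s n i) (Dl t n i) I t)
    (hduc : ∀ (n : ℤ) (i : Fin k), |n| ≤ (Nstar : ℤ) →
      ContinuousOn (fun t => Du t n i) I)
    (hdlc : ∀ (n : ℤ) (i : Fin k), |n| ≤ (Nstar : ℤ) →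
      ContinuousOn (fun t => Dl t n i) I)
    (hsuper : ∀ t ∈ I, ∀ (n : ℤ) (i : Fin k), |n| ≤ (Nstar : ℤ) →
      Du t n i + μ * (n : ℝ) - (1 / 2) * σ ^ 2 * (n : ℝ) ^ 2 * (ζ + γ)
        + ∑ j ∈ Finset.univ.erase i, q t i j * Ugamma γ (θu t n j - θu t n i)
        + (if n < (Nstar : ℤ) then Hm i (θu t (n + 1) i - θu t n i) else 0)
        + (if -n < (Nstar : ℤ) then Hp i (θu t (n - 1) i - θu t n i) else 0) ≤ 0)
    (hsub : ∀ t ∈ I, ∀ (n : ℤ) (i : Fin k), |n| ≤ (Nstar : ℤ) →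
      0 ≤ Dl t n i + μ * (n : ℝ) - (1 / 2) * σ ^ 2 * (n : ℝ) ^ 2 * (ζ + γ)
        + ∑ j ∈ Finset.univ.erase i, q t i j * Ugamma γ (θl t n j - θl t n i)
        + (if n < (Nstar : ℤ) then Hm i (θl t (n + 1) i - θl t n i) else 0)
        + (if -n < (Nstar : ℤ) then Hp i (θl t (n - 1) i - θl t n i) else 0))
    (hterm : ∀ (n : ℤ) (i : Fin k), |n| ≤ (Nstar : ℤ) →
      θl T n i ≤ -ℓ n ∧ -ℓ n ≤ θu T n i) :
    ∀ t ∈ I, ∀ (n : ℤ) (i : Fin k), |n| ≤ (Nstar : ℤ) → θl t n i ≤ θu t n i :=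
  comparison_principle_general T μ σ ζ γ hγ Nstar k q hqnn Hm Hp hHmMono hHpMono ℓ I hIsub hTI
    hIconn θu θl Du Dl hdu hdl hsuper hsub hterm
end

section
/- Positivity of the filter: let π : [t₀, t₁) → ℝ^k be absolutely continuous with π^i(t₀) > 0 for all i, satisfying (π^i)'(t) = Σ_j (q_t^{ji} π^j(t) + π^i(t) π^j(t) A_t^{ji}) for a.e. t, where q_t^{ji} ≥ 0 for j ≠ i, the functions t ↦ q_t^{ji} and t ↦ A_t^{ji} are bounded measurable, A^{ii} ≡ 0, and π^j(t) ≥ 0 for all j, t. Then π^i(t) > 0 for all t ∈ [t₀, t₁) and all i; in fact π^i(t) ≥ π^i(t₀) exp(∫_{t₀}^t (q_u^{ii} + Σ_{j≠i} π^j(u) A_u^{ji}) du). -/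
/-!
Dropping the nonnegative inflow terms `q^{ji} π^j` (`j ≠ i`) from the equation for `π^i` leaves
the linear differential inequality `(π^i)' ≥ g π^i` with `g = q^{ii} + ∑_{j ≠ i} π^j A^{ji}`.
Hence `π^i · exp (-∫ g)` is absolutely continuous with nonnegative a.e. derivative, so it is
nondecreasing, which is the exponential lower bound.
-/

open MeasureTheory Set Filter intervalIntegral

theorem AbsolutelyContinuousOnInterval.comp_lipschitzOnWith {X Y : Type*}
    [PseudoMetricSpace X] [PseudoMetricSpace Y] {f : ℝ → X} {φ : X → Y}
    {a b : ℝ} {K : NNReal} {s : Set X} (hf : AbsolutelyContinuousOnInterval f a b)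
    (hφ : LipschitzOnWith K φ s) (hfs : MapsTo f (uIcc a b) s) :
    AbsolutelyContinuousOnInterval (φ ∘ f) a b := by
  rw [absolutelyContinuousOnInterval_iff] at hf ⊢
  intro ε hε
  obtain ⟨δ, hδ, hfδ⟩ := hf (ε / (K + 1)) (by positivity)
  refine ⟨δ, hδ, fun E hE hEδ => ?_⟩
  calc ∑ i ∈ Finset.range E.1, dist ((φ ∘ f) (E.2 i).1) ((φ ∘ f) (E.2 i).2)
      ≤ ∑ i ∈ Finset.range E.1, K * dist (f (E.2 i).1) (f (E.2 i).2) :=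
        Finset.sum_le_sum fun i hi =>
          hφ.dist_le_mul _ (hfs (hE.1 i hi).1) _ (hfs (hE.1 i hi).2)
    _ = K * ∑ i ∈ Finset.range E.1, dist (f (E.2 i).1) (f (E.2 i).2) := by
        rw [Finset.mul_sum]
    _ ≤ K * (ε / (K + 1)) := by gcongr; exact (hfδ E hE hEδ).le
    _ < ε := by
        rw [mul_div_assoc', div_lt_iff₀ (by positivity)]
        nlinarith

theorem AbsolutelyContinuousOnInterval.comp_contDiff {f : ℝ → ℝ} {φ : ℝ → ℝ} {a b : ℝ}
    (hf : AbsolutelyContinuousOnInterval f a b) (hφ : ContDiff ℝ 1 φ) :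
    AbsolutelyContinuousOnInterval (φ ∘ f) a b := by
  obtain ⟨M, hM⟩ := hf.exists_bound
  obtain ⟨K, hK⟩ := hφ.contDiffOn.exists_lipschitzOnWith one_ne_zero (convex_Icc (-M) M)
    isCompact_Icc
  exact hf.comp_lipschitzOnWith hK fun x hx => abs_le.1 (hM x hx)

theorem AbsolutelyContinuousOnInterval.mul_exp_integral_le {x g : ℝ → ℝ} {a b : ℝ} (hab : a ≤ b)
    (hx : AbsolutelyContinuousOnInterval x a b) (hg : IntervalIntegrable g volume a b)
    (hxg : ∀ᵐ u, u ∈ Icc a b → g u * x u ≤ deriv x u) :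
    x a * Real.exp (∫ u in a..b, g u) ≤ x b := by
  set G : ℝ → ℝ := fun t => ∫ u in a..t, g u
  have hG : AbsolutelyContinuousOnInterval G a b :=
    hg.absolutelyContinuousOnInterval_intervalIntegral left_mem_uIcc
  have hE : AbsolutelyContinuousOnInterval (fun t => Real.exp (-G t)) a b :=
    hG.neg.comp_contDiff (φ := Real.exp) Real.contDiff_exp
  have hderiv : ∀ᵐ u, u ∈ Icc a b →
      deriv (fun t => x t * Real.exp (-G t)) u = (deriv x u - g u * x u) * Real.exp (-G u) := by
    filter_upwards [hx.ae_differentiableAt, hg.ae_hasDerivAt_integral] with u hxu hGu hu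
    rw [← uIcc_of_le hab] at hu
    have hE' : HasDerivAt (fun t => Real.exp (-G t)) (Real.exp (-G u) * -g u) u :=
      (hGu hu a left_mem_uIcc).fun_neg.exp
    rw [((hxu hu).hasDerivAt.fun_mul hE').deriv]
    ring
  have hmono : x a * Real.exp (-G a) ≤ x b * Real.exp (-G b) := by
    rw [← sub_nonneg, ← (hx.fun_mul hE).integral_deriv_eq_sub]
    refine integral_nonneg_of_ae_restrict hab ?_
    filter_upwards [ae_restrict_mem measurableSet_Icc, ae_restrict_of_ae hderiv,
      ae_restrict_of_ae hxg] with u hu hdu hxgu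
    rw [Pi.zero_apply, hdu hu]
    exact mul_nonneg (sub_nonneg.2 (hxgu hu)) (Real.exp_pos _).le
  have hGa : G a = 0 := integral_same
  rw [hGa, neg_zero, Real.exp_zero, mul_one] at hmono
  calc x a * Real.exp (G b) ≤ x b * Real.exp (-G b) * Real.exp (G b) := by gcongr
    _ = x b := by rw [mul_assoc, ← Real.exp_add, neg_add_cancel, Real.exp_zero, mul_one]

theorem mul_exp_integral_le_of_eq_add_integral {x g h : ℝ → ℝ} {a b : ℝ} (hab : a ≤ b)
    (hg : IntervalIntegrable g volume a b) (hh : IntervalIntegrable h volume a b)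
    (hx : ∀ t ∈ Icc a b, x t = x a + ∫ u in a..t, h u)
    (hgh : ∀ u ∈ Icc a b, g u * x u ≤ h u) :
    x a * Real.exp (∫ u in a..b, g u) ≤ x b := by
  set X : ℝ → ℝ := fun t => x a + ∫ u in a..t, h u
  have hX : AbsolutelyContinuousOnInterval X a b :=
    (LipschitzWith.const (x a)).lipschitzOnWith.absolutelyContinuousOnInterval.add
      (hh.absolutelyContinuousOnInterval_intervalIntegral left_mem_uIcc)
  have hXx : ∀ t ∈ Icc a b, X t = x t := fun t ht => (hx t ht).symm
  have hXg : ∀ᵐ u, u ∈ Icc a b → g u * X u ≤ deriv X u := by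
    filter_upwards [hh.ae_hasDerivAt_integral] with u hu hmem
    rw [hXx u hmem, ((hu (uIcc_of_le hab ▸ hmem) a left_mem_uIcc).const_add (x a)).deriv]
    exact hgh u hmem
  have := hX.mul_exp_integral_le hab hg hXg
  rwa [hXx a (left_mem_Icc.2 hab), hXx b (right_mem_Icc.2 hab)] at this

theorem IntervalIntegrable.of_memLp_top {f : ℝ → ℝ} {a b : ℝ} (hab : a ≤ b)
    (hf : MemLp f ⊤ (volume.restrict (Ioc a b))) : IntervalIntegrable f volume a b :=
  (intervalIntegrable_iff_integrableOn_Ioc_of_le hab).2 (hf.integrable le_top)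

theorem memLp_top_restrict_of_abs_le {f : ℝ → ℝ} {s : Set ℝ} (hs : MeasurableSet s)
    (hf : Measurable f) {M : ℝ} (hM : ∀ u ∈ s, |f u| ≤ M) :
    MemLp f ⊤ (volume.restrict s) :=
  memLp_top_of_bound hf.aestronglyMeasurable M ((ae_restrict_iff' hs).2 (.of_forall hM))

theorem diag_add_sum_erase_mul_le_sum {ι : Type*} [Fintype ι] [DecidableEq ι]
    (p : ι → ℝ) (Q A : ι → ι → ℝ) (i : ι) (hQ : ∀ j, j ≠ i → 0 ≤ Q j i) (hA : A i i = 0)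
    (hp : ∀ j, 0 ≤ p j) :
    (Q i i + ∑ j ∈ Finset.univ.erase i, p j * A j i) * p i ≤
      ∑ j, (Q j i * p j + p i * p j * A j i) := by
  rw [Finset.sum_add_distrib, ← Finset.add_sum_erase _ _ (Finset.mem_univ i),
    ← Finset.add_sum_erase _ _ (Finset.mem_univ i), hA, add_mul, Finset.sum_mul]
  have hrest : 0 ≤ ∑ j ∈ Finset.univ.erase i, Q j i * p j :=
    Finset.sum_nonneg fun j hj => mul_nonneg (hQ j (Finset.ne_of_mem_erase hj)) (hp j)
  have hswap : ∑ j ∈ Finset.univ.erase i, p j * A j i * p i =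
      ∑ j ∈ Finset.univ.erase i, p i * p j * A j i :=
    Finset.sum_congr rfl fun j _ => by ring
  rw [hswap]
  linarith

theorem filter_positivity_general
    (k : ℕ) (t0 t1 : ℝ)
    (q A : ℝ → Fin k → Fin k → ℝ)
    (hqmeas : ∀ i j, Measurable fun u => q u i j)
    (hAmeas : ∀ i j, Measurable fun u => A u i j)
    (C : ℝ)
    (hqbd : ∀ u : ℝ, ∀ i j : Fin k, |q u i j| ≤ C)
    (hAbd : ∀ u : ℝ, ∀ i j : Fin k, |A u i j| ≤ C)
    (hqnn : ∀ u : ℝ, ∀ i j : Fin k, j ≠ i → 0 ≤ q u j i)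
    (hAdiag : ∀ u : ℝ, ∀ i : Fin k, A u i i = 0)
    (π : ℝ → Fin k → ℝ)
    (hπmeas : ∀ i, Measurable fun t => π t i)
    (Cπ : ℝ) (hπbd : ∀ t ∈ Set.Ico t0 t1, ∀ j, π t j ≤ Cπ)
    (hπnn : ∀ t ∈ Set.Ico t0 t1, ∀ j, 0 ≤ π t j)
    (hinit : ∀ i, 0 < π t0 i)
    (heq : ∀ i : Fin k, ∀ t ∈ Set.Ico t0 t1,
      π t i = π t0 i + ∫ u in t0..t, ∑ j, (q u j i * π u j + π u i * π u j * A u j i)) :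
    ∀ i : Fin k, ∀ t ∈ Set.Ico t0 t1,
      0 < π t i ∧
      π t0 i * Real.exp (∫ u in t0..t,
          (q u i i + ∑ j ∈ Finset.univ.erase i, π u j * A u j i)) ≤ π t i := by
  intro i t ht
  have hsub : Icc t0 t ⊆ Ico t0 t1 := Icc_subset_Ico_right ht.2
  have hIoc : Ioc t0 t ⊆ Ico t0 t1 := Ioc_subset_Icc_self.trans hsub
  have hq : ∀ j l, MemLp (fun u => q u j l) ⊤ (volume.restrict (Ioc t0 t)) := fun j l =>
    memLp_top_restrict_of_abs_le measurableSet_Ioc (hqmeas j l) fun u _ => hqbd u j l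
  have hA : ∀ j l, MemLp (fun u => A u j l) ⊤ (volume.restrict (Ioc t0 t)) := fun j l =>
    memLp_top_restrict_of_abs_le measurableSet_Ioc (hAmeas j l) fun u _ => hAbd u j l
  have hπ : ∀ j, MemLp (fun u => π u j) ⊤ (volume.restrict (Ioc t0 t)) := fun j =>
    memLp_top_restrict_of_abs_le measurableSet_Ioc (hπmeas j) fun u hu =>
      (abs_of_nonneg (hπnn u (hIoc hu) j)).trans_le (hπbd u (hIoc hu) j)
  have hg : IntervalIntegrable (fun u => q u i i + ∑ j ∈ Finset.univ.erase i, π u j * A u j i)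
      volume t0 t :=
    .of_memLp_top ht.1 ((hq i i).add (memLp_finsetSum _ fun j _ => (hA j i).mul' (hπ j)))
  have hh : IntervalIntegrable (fun u => ∑ j, (q u j i * π u j + π u i * π u j * A u j i))
      volume t0 t :=
    .of_memLp_top ht.1 (memLp_finsetSum _ fun j _ =>
      ((hπ j).mul' (hq j i)).add ((hA j i).mul' ((hπ j).mul' (hπ i) (r := ⊤))))
  have hbound := mul_exp_integral_le_of_eq_add_integral ht.1 hg hh
    (fun s hs => heq i s (hsub hs))
    (fun u hu => diag_add_sum_erase_mul_le_sum (π u) (fun j l => q u j l) (fun j l => A u j l) i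
      (hqnn u i) (hAdiag u i) (hπnn u (hsub hu)))
  exact ⟨(mul_pos (hinit i) (Real.exp_pos _)).trans_le hbound, hbound⟩

/-- Positivity of the filter: an absolutely continuous solution (in integral form)
of the inter-jump filtering ODE with strictly positive initial condition stays
strictly positive, with an explicit exponential lower bound. -/
theorem filter_positivity
    (k : ℕ) (t0 t1 : ℝ) (ht : t0 < t1)
    (q A : ℝ → Fin k → Fin k → ℝ)
    (hqmeas : ∀ i j, Measurable fun u => q u i j)
    (hAmeas : ∀ i j, Measurable fun u => A u i j)
    (C : ℝ)
    (hqbd : ∀ u : ℝ, ∀ i j : Fin k, |q u i j| ≤ C)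
    (hAbd : ∀ u : ℝ, ∀ i j : Fin k, |A u i j| ≤ C)
    (hqnn : ∀ u : ℝ, ∀ i j : Fin k, j ≠ i → 0 ≤ q u j i)
    (hAdiag : ∀ u : ℝ, ∀ i : Fin k, A u i i = 0)
    (π : ℝ → Fin k → ℝ)
    (hπmeas : ∀ i, Measurable fun t => π t i)
    (Cπ : ℝ) (hπbd : ∀ t ∈ Set.Ico t0 t1, ∀ j, π t j ≤ Cπ)
    (hπnn : ∀ t ∈ Set.Ico t0 t1, ∀ j, 0 ≤ π t j)
    (hinit : ∀ i, 0 < π t0 i)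
    (heq : ∀ i : Fin k, ∀ t ∈ Set.Ico t0 t1,
      π t i = π t0 i + ∫ u in t0..t, ∑ j, (q u j i * π u j + π u i * π u j * A u j i)) :
    ∀ i : Fin k, ∀ t ∈ Set.Ico t0 t1,
      0 < π t i ∧
      π t0 i * Real.exp (∫ u in t0..t,
          (q u i i + ∑ j ∈ Finset.univ.erase i, π u j * A u j i)) ≤ π t i :=
  filter_positivity_general k t0 t1 q A hqmeas hAmeas C hqbd hAbd hqnn hAdiag π hπmeas Cπ hπbd hπnn
    hinit heq
end

section
/- Strictly concave costs force impulses into the continuation region: let V : ℝ → ℝ, 𝒵(x) = [0,∞), cost c : ℝ × [0,∞) → (0,∞) satisfying c(x, δ + δ̄) < c(x,δ) + c(x+δ, δ̄) for all x ∈ ℝ and δ, δ̄ ≥ 0. Suppose for every x in the intervention region ℐ* := {x : ℳV(x) = V(x)} there is a unique maximizer δ*(x) > 0 of δ ↦ V(x+δ) − c(x,δ), where ℳV(x) := sup_{δ≥0}{V(x+δ) − c(x,δ)} ≤ V(x) on ℝ. Then for every x ∈ ℐ*, the post-impulse state x + δ*(x) lies in the continuation region (ℐ*)^c. -/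
/-! If `y = x + δ*(x)` were again an intervention point, then jumping from `x` straight to
`y + δ*(y)` with the single impulse `δ*(x) + δ*(y)` would be admissible at `x`, and comparing
it with the optimal impulse `δ*(x)` forces `c(x, δ*(x)) + c(y, δ*(y)) ≤ c(x, δ*(x) + δ*(y))`,
against the strict subadditivity of the cost. -/

lemma cost_add_le_of_isGreatest_gain {V : ℝ → ℝ} {c : ℝ → ℝ → ℝ} {x δ δ' : ℝ}
    (hδδ' : 0 ≤ δ + δ')
    (hmax : IsGreatest ((fun d => V (x + d) - c x d) '' Set.Ici 0) (V (x + δ) - c x δ))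
    (hcont : V (x + δ) = V (x + δ + δ') - c (x + δ) δ') :
    c x δ + c (x + δ) δ' ≤ c x (δ + δ') := by
  have hcombined := hmax.2 ⟨δ + δ', Set.mem_Ici.2 hδδ', rfl⟩
  simp only [← add_assoc] at hcombined
  linarith

theorem concave_costs_shift_to_continuation_general
    (V : ℝ → ℝ) (c : ℝ → ℝ → ℝ)
    (hconc : ∀ x δ δ', 0 ≤ δ → 0 ≤ δ' → c x (δ + δ') < c x δ + c (x + δ) δ')
    (MV : ℝ → ℝ)
    (hMV : ∀ x, MV x = sSup ((fun δ => V (x + δ) - c x δ) '' Set.Ici 0))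
    (δstar : ℝ → ℝ)
    (hδpos : ∀ x, MV x = V x → 0 < δstar x)
    (hmax : ∀ x, MV x = V x →
      IsGreatest ((fun δ => V (x + δ) - c x δ) '' Set.Ici 0)
        (V (x + δstar x) - c x (δstar x))) :
    ∀ x, MV x = V x → ¬ MV (x + δstar x) = V (x + δstar x) := by
  intro x hx hy
  set y := x + δstar x
  have hδx := (hδpos x hx).le
  have hδy := (hδpos y hy).le
  have hMVy : MV y = V (y + δstar y) - c y (δstar y) := (hMV y).trans (hmax y hy).csSup_eq
  have hsuper := cost_add_le_of_isGreatest_gain (add_nonneg hδx hδy) (hmax x hx) (by linarith)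
  exact (hconc x _ _ hδx hδy).not_ge hsuper

/-- Strictly concave (subadditive) costs force impulses into the continuation
region: if `c(x, δ+δ̄) < c(x,δ) + c(x+δ, δ̄)` for `δ, δ̄ ≥ 0`, `ℳV ≤ V`, and on the
intervention region `ℐ* = {ℳV = V}` the supremum is attained at a unique
`δ*(x) > 0`, then for every `x ∈ ℐ*` the post-impulse state `x + δ*(x)` lies in
the continuation region. -/
theorem concave_costs_shift_to_continuation
    (V : ℝ → ℝ) (c : ℝ → ℝ → ℝ)
    (hcpos : ∀ x δ, 0 ≤ δ → 0 < c x δ)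
    (hconc : ∀ x δ δ', 0 ≤ δ → 0 ≤ δ' → c x (δ + δ') < c x δ + c (x + δ) δ')
    (MV : ℝ → ℝ)
    (hMV : ∀ x, MV x = sSup ((fun δ => V (x + δ) - c x δ) '' Set.Ici 0))
    (hle : ∀ x, MV x ≤ V x)
    (δstar : ℝ → ℝ)
    (hδpos : ∀ x, MV x = V x → 0 < δstar x)
    (hmax : ∀ x, MV x = V x →
      IsGreatest ((fun δ => V (x + δ) - c x δ) '' Set.Ici 0)
        (V (x + δstar x) - c x (δstar x)))
    (huniq : ∀ x, MV x = V x → ∀ δ, 0 ≤ δ → V (x + δ) - c x δ = MV x → δ = δstar x) :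
    ∀ x, MV x = V x → ¬ MV (x + δstar x) = V (x + δstar x) :=
  concave_costs_shift_to_continuation_general V c hconc MV hMV δstar hδpos hmax
end
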